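/- D(e^{iπ/3}) − D(e^{−iπ/3}) = (3√3/2) · L(χ₋₃, 2), where D is the Bloch–Wigner dilogarithm, χ₋₃ is the unique nontrivial Dirichlet character modulo 3, and L(χ₋₃, 2) = Σ_{n≥1} χ₋₃(n)/n². -/

import Mathlib

open scoped Real

/-- The dilogarithm `Li₂`, the analytic continuation of `∑_{n ≥ 1} zⁿ / n²`
(which is given for `|z| ≤ 1`), via the classical integral formula
`Li₂(z) = -∫₀¹ log(1 - z t) / t dt` (principal branch). -/
noncomputable def Li2 (z : ℂ) : ℂ :=
  -∫ t in (0:ℝ)..1, Complex.log (1 - z * t) / t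

/-- The Bloch–Wigner dilogarithm `D(z) = Im(Li₂(z)) + arg(1 - z) · log |z|`. -/
noncomputable def blochWigner (z : ℂ) : ℝ :=
  (Li2 z).im + (1 - z).arg * Real.log ‖z‖

/-! On the unit circle `D(z) = Im Li₂(z)`, and `Li₂(z̄) = conj Li₂(z)` for `|z| ≤ 1`, so for
`ζ = e^{iπ/3}` we get `(D(ζ) - D(ζ̄)) i = Li₂(ζ) - Li₂(ζ̄) = ∑ (ζⁿ - ζ̄ⁿ) / n²`, using the power
series of `Li₂` on the closed unit disc (termwise integration of the integral formula).
As `ζ` and `ζ̄` are the roots of `X² - X + 1`, `ζⁿ - ζ̄ⁿ = (-1)ⁿ⁺¹ χ₋₃(n) · i√3`. The sign twist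
only rescales the L-series: since `χ₋₃(2) = -1`, the even terms of `∑ χ₋₃(n)/n²` add up to `-L/4`, so
`∑ (-1)ⁿ⁺¹ χ₋₃(n)/n² = L - 2 · (-L/4) = (3/2) L(χ₋₃, 2)`. -/

open Complex ComplexConjugate MeasureTheory Set

theorem setIntegral_Ioo_zero_one_pow (n : ℕ) : ∫ t in Ioo (0 : ℝ) 1, t ^ n = 1 / (n + 1) := by
  rw [← integral_Ioc_eq_integral_Ioo, ← intervalIntegral.integral_of_le zero_le_one, integral_pow]
  simp

theorem hasSum_setIntegral_Ioo_mul_pow {c : ℕ → ℂ} (hc : Summable fun n => ‖c n‖ / (n + 1)) :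
    HasSum (fun n => c n / (n + 1)) (∫ t in Ioo (0 : ℝ) 1, ∑' n, c n * (t : ℂ) ^ n) := by
  have hint (n : ℕ) : ∫ t in Ioo (0 : ℝ) 1, c n * (t : ℂ) ^ n = c n / (n + 1) := by
    simp_rw [← ofReal_pow, integral_const_mul]
    rw [integral_complex_ofReal, setIntegral_Ioo_zero_one_pow]
    push_cast
    ring
  have hnorm (n : ℕ) : ∫ t in Ioo (0 : ℝ) 1, ‖c n * (t : ℂ) ^ n‖ = ‖c n‖ / (n + 1) := by
    rw [← mul_one_div, ← setIntegral_Ioo_zero_one_pow, ← integral_const_mul]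
    refine setIntegral_congr_fun measurableSet_Ioo fun t ht => ?_
    simp [abs_of_pos ht.1]
  simp_rw [← hint]
  refine hasSum_integral_of_summable_integral_norm (fun n => ?_) (by simpa only [hnorm] using hc)
  exact (by fun_prop : Continuous fun t : ℝ => c n * (t : ℂ) ^ n).integrableOn_Icc.mono_set
    Ioo_subset_Icc_self

theorem hasSum_neg_log_one_sub_mul_div {z : ℂ} {t : ℝ} (hz : ‖z‖ ≤ 1) (ht : t ∈ Ioo (0 : ℝ) 1) :
    HasSum (fun n : ℕ => z ^ (n + 1) / (n + 1) * (t : ℂ) ^ n) (-log (1 - z * t) / t) := by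
  have hzt : ‖z * t‖ < 1 := by
    rw [norm_mul, norm_real, Real.norm_of_nonneg ht.1.le]
    nlinarith [ht.1, ht.2, norm_nonneg z]
  have ht0 : (t : ℂ) ≠ 0 := ofReal_ne_zero.mpr ht.1.ne'
  refine ((hasSum_taylorSeries_neg_log' hzt).div_const (t : ℂ)).congr_fun fun n => ?_
  rw [mul_pow, pow_succ, pow_succ]
  field_simp

theorem hasSum_Li2 {z : ℂ} (hz : ‖z‖ ≤ 1) : HasSum (fun n : ℕ => z ^ n / (n : ℂ) ^ 2) (Li2 z) := by
  set c : ℕ → ℂ := fun n => z ^ (n + 1) / (n + 1)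
  have hc : Summable fun n => ‖c n‖ / (n + 1) := by
    have hsum : Summable fun n : ℕ => 1 / ((n : ℝ) + 1) ^ 2 := by
      exact_mod_cast (summable_nat_add_iff 1).mpr (Real.summable_one_div_nat_pow.mpr one_lt_two)
    refine hsum.of_nonneg_of_le (fun n => by positivity) fun n => ?_
    have hn : ‖(n : ℂ) + 1‖ = n + 1 := by exact_mod_cast norm_natCast (n + 1)
    rw [norm_div, norm_pow, hn, div_div, ← sq]
    gcongr
    exact pow_le_one₀ (norm_nonneg z) hz
  have hLi2 : Li2 z = ∫ t in Ioo (0 : ℝ) 1, ∑' n, c n * (t : ℂ) ^ n := by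
    -- the Taylor expansion of `log (1 - z t)` may fail at `t = 1`, hence the open interval
    rw [Li2, intervalIntegral.integral_of_le zero_le_one, integral_Ioc_eq_integral_Ioo,
      ← integral_neg]
    refine setIntegral_congr_fun measurableSet_Ioo fun t ht => ?_
    rw [(hasSum_neg_log_one_sub_mul_div hz ht).tsum_eq, neg_div]
  rw [← hasSum_nat_add_iff' 1]
  simpa [hLi2, c, div_div, sq] using hasSum_setIntegral_Ioo_mul_pow hc

theorem Li2_conj {z : ℂ} (hz : ‖z‖ ≤ 1) : Li2 (conj z) = conj (Li2 z) := by
  refine (hasSum_Li2 (by rwa [norm_conj])).unique ?_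
  simpa using hasSum_conj'.mpr (hasSum_Li2 hz)

theorem blochWigner_of_norm_eq_one {z : ℂ} (hz : ‖z‖ = 1) : blochWigner z = (Li2 z).im := by
  rw [blochWigner, hz, Real.log_one, mul_zero, add_zero]

theorem blochWigner_sub_blochWigner_conj_mul_I {z : ℂ} (hz : ‖z‖ = 1) :
    ((blochWigner z - blochWigner (conj z) : ℝ) : ℂ) * I = Li2 z - Li2 (conj z) := by
  rw [blochWigner_of_norm_eq_one hz, blochWigner_of_norm_eq_one (by rwa [norm_conj]),
    Li2_conj hz.le, conj_im, sub_conj]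
  push_cast
  ring

theorem DirichletCharacter.map_two_eq_neg_one {R : Type*} [CommRing R] [NoZeroDivisors R]
    {χ : DirichletCharacter R 3} (hχ : χ ≠ 1) : χ 2 = -1 := by
  have hsq : χ 2 * χ 2 = 1 := by rw [← map_mul, show (2 * 2 : ZMod 3) = 1 by decide, map_one]
  refine (mul_self_eq_one_iff.mp hsq).resolve_left fun h2 => hχ <| MulChar.ext fun u => ?_
  rw [MulChar.one_apply u.isUnit]
  obtain hu | hu : (u : ZMod 3) = 1 ∨ (u : ZMod 3) = 2 := by revert u; decide
  all_goals simp [hu, h2]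

theorem pow_sub_pow_eq_of_sq_eq_sub_one {R : Type*} [CommRing R] {χ : DirichletCharacter R 3}
    (hχ : χ 2 = -1) {x y : R} (hx : x ^ 2 = x - 1) (hy : y ^ 2 = y - 1) (n : ℕ) :
    x ^ n - y ^ n = (-1) ^ (n + 1) * χ n * (x - y) := by
  have hx3 : x ^ 3 = -1 := by linear_combination (x + 1) * hx
  have hy3 : y ^ 3 = -1 := by linear_combination (y + 1) * hy
  obtain ⟨q, r, hr, rfl⟩ : ∃ q r, r < 3 ∧ n = r + 3 * q :=
    ⟨n / 3, n % 3, n.mod_lt three_pos, (n.mod_add_div 3).symm⟩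
  have hr3 : ((r + 3 * q : ℕ) : ZMod 3) = r := (ZMod.natCast_eq_natCast_iff' _ _ 3).mpr (by omega)
  rw [hr3, pow_add x, pow_add y, pow_mul, pow_mul, hx3, hy3,
    show (-1 : R) ^ (r + 3 * q + 1) = (-1) ^ (r + 1) * (-1) ^ q by
      rw [add_right_comm, pow_add, pow_mul]; norm_num]
  interval_cases r
  · rw [Nat.cast_zero, χ.map_nonunit not_isUnit_zero]; ring
  · rw [Nat.cast_one, map_one]; ring
  · rw [Nat.cast_ofNat, hχ]; linear_combination ((-1) ^ q) * (hx - hy)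

theorem HasSum.neg_one_pow_succ_mul {𝕜 : Type*} [NormedField 𝕜] [CompleteSpace 𝕜]
    {f : ℕ → 𝕜} {a c : 𝕜} (hf : HasSum f a) (hf2 : ∀ n, f (2 * n) = c * f n) :
    HasSum (fun n => (-1) ^ (n + 1) * f n) ((1 - 2 * c) * a) := by
  have heven : HasSum (fun k => f (2 * k)) (c * a) := by simpa only [hf2] using hf.mul_left c
  obtain ⟨o, hodd⟩ : Summable fun k => f (2 * k + 1) :=
    hf.summable.comp_injective fun m n h => by simpa using h
  have ha : a = c * a + o := hf.unique (HasSum.even_add_odd (f := f) heven hodd)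
  have hneg : HasSum (fun k => (-1) ^ (2 * k + 1) * f (2 * k)) (-(c * a)) := by
    refine heven.neg.congr_fun fun k => ?_
    rw [pow_succ, pow_mul, neg_one_sq, one_pow, one_mul, neg_one_mul]
  have hpos : HasSum (fun k => (-1) ^ (2 * k + 1 + 1) * f (2 * k + 1)) o := by
    refine hodd.congr_fun fun k => ?_
    rw [add_assoc, ← two_mul, ← mul_add, pow_mul, neg_one_sq, one_pow, one_mul]
  convert HasSum.even_add_odd (f := fun n => (-1) ^ (n + 1) * f n) hneg hpos using 1
  linear_combination ha

theorem DirichletCharacter.hasSum_LFunction_two {N : ℕ} [NeZero N] (χ : DirichletCharacter ℂ N) :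
    HasSum (fun n : ℕ => χ n / (n : ℂ) ^ 2) (χ.LFunction 2) := by
  rw [χ.LFunction_eq_LSeries (by norm_num)]
  refine (χ.LSeriesSummable_of_one_lt_re (s := 2) (by norm_num)).LSeriesHasSum.congr_fun fun n => ?_
  rw [LSeries.term_of_ne_zero' two_ne_zero, cpow_two]

theorem exp_pi_div_three_mul_I_sq :
    exp ((π / 3 : ℝ) * I) ^ 2 = exp ((π / 3 : ℝ) * I) - 1 := by
  have hsqrt : ((√3 : ℝ) : ℂ) ^ 2 = 3 := by norm_cast; simp
  rw [exp_mul_I, ← ofReal_cos, ← ofReal_sin, Real.cos_pi_div_three, Real.sin_pi_div_three]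
  push_cast
  linear_combination ((√3 : ℂ) ^ 2 / 4) * I_sq - (1 / 4) * hsqrt

theorem exp_pi_div_three_mul_I_sub_conj :
    exp ((π / 3 : ℝ) * I) - conj (exp ((π / 3 : ℝ) * I)) = (√3 : ℝ) * I := by
  rw [sub_conj, exp_ofReal_mul_I_im, Real.sin_pi_div_three]
  push_cast
  ring

/-- `D(e^{iπ/3}) − D(e^{−iπ/3}) = (3√3/2) · L(χ₋₃, 2)`, where `χ₋₃` is the unique nontrivial
Dirichlet character modulo 3. -/
theorem blochWigner_diff_eq_L2 (χ : DirichletCharacter ℂ 3) (hχ : χ ≠ 1) :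
    (↑(blochWigner (Complex.exp ((π / 3 : ℝ) * Complex.I)) -
        blochWigner (Complex.exp ((-(π / 3) : ℝ) * Complex.I))) : ℂ) =
      ((3 * Real.sqrt 3 / 2 : ℝ) : ℂ) * DirichletCharacter.LFunction χ 2 := by
  set ζ := exp ((π / 3 : ℝ) * I)
  have hconj : exp ((-(π / 3) : ℝ) * I) = conj ζ := by
    rw [← exp_conj, map_mul, conj_ofReal, conj_I, ofReal_neg, neg_mul_comm]
  have hnorm : ‖ζ‖ = 1 := norm_exp_ofReal_mul_I _
  have hsq_conj : conj ζ ^ 2 = conj ζ - 1 := by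
    rw [← map_pow, exp_pi_div_three_mul_I_sq, map_sub, map_one]
  have hχ2 : χ 2 = -1 := χ.map_two_eq_neg_one hχ
  have hdiff := (hasSum_Li2 hnorm.le).sub (hasSum_Li2 (by rw [norm_conj, hnorm]))
  have halt := χ.hasSum_LFunction_two.neg_one_pow_succ_mul (c := -1 / 4) fun n => by
    push_cast
    rw [map_mul, hχ2]
    ring
  have htwist : HasSum (fun n : ℕ => ζ ^ n / (n : ℂ) ^ 2 - conj ζ ^ n / (n : ℂ) ^ 2)
      ((√3 : ℝ) * I * ((1 - 2 * (-1 / 4)) * χ.LFunction 2)) := by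
    refine (halt.mul_left _).congr_fun fun n => ?_
    rw [← sub_div, pow_sub_pow_eq_of_sq_eq_sub_one hχ2 exp_pi_div_three_mul_I_sq hsq_conj n,
      exp_pi_div_three_mul_I_sub_conj]
    ring
  rw [hconj]
  refine mul_right_cancel₀ I_ne_zero ?_
  rw [blochWigner_sub_blochWigner_conj_mul_I hnorm, hdiff.unique htwist]
  push_cast
  ring
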